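/- Abstraction elimination: for every term t over variables (terms extended with a variable constructor var : V → Term) and every variable v, there exists a term A (the 'bracket abstraction' [v]t) not containing v such that A x ⟶* t[v := x] for every closed term x, where A is built by the rules [v]v = S K K, [v]u = K u when v does not occur in u, and [v](a b) = S ([v]a) ([v]b). -/

import Mathlib

inductive Term (V : Type) : Type
  | S : Term V
  | K : Term V
  | var : V → Term V
  | app : Term V → Term V → Term V

variable {V : Type} [DecidableEq V]

def occurs (v : V) : Term V → Bool
  | .S => false
  | .K => false
  | .var w => v = w
  | .app a b => occurs v a || occurs v b

def SKK {V : Type} : Term V := .app (.app .S .K) .K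

def babs (v : V) : Term V → Term V
  | .S => .app .K .S
  | .K => .app .K .K
  | .var w => if v = w then SKK else .app .K (.var w)
  | .app a b =>
      if occurs v (.app a b) then .app (.app .S (babs v a)) (babs v b)
      else .app .K (.app a b)

def subst (v : V) (x : Term V) : Term V → Term V
  | .S => .S
  | .K => .K
  | .var w => if v = w then x else .var w
  | .app a b => .app (subst v x a) (subst v x b)

def Closed (t : Term V) : Prop := ∀ v : V, occurs v t = false

inductive Step : Term V → Term V → Prop
  | Srule (a b c : Term V) :
      Step (.app (.app (.app .S a) b) c) (.app (.app a c) (.app b c))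
  | Krule (a b : Term V) : Step (.app (.app .K a) b) a
  | appL {a a' : Term V} (b : Term V) : Step a a' → Step (.app a b) (.app a' b)
  | appR (a : Term V) {b b' : Term V} : Step b b' → Step (.app a b) (.app a b')

def Reds : Term V → Term V → Prop := Relation.ReflTransGen Step

/-! Structural induction on `t`, one case per abstraction rule: `S K K x ⟶ K x (K x) ⟶ x`;
`K u x ⟶ u`, which is `u[v := x]` because `v` does not occur in `u`; and
`S A B x ⟶ A x (B x)`, after which the induction hypotheses reduce `A x` and `B x` to the
substituted halves under the congruence rules. -/

theorem subst_eq_self_of_occurs_eq_false (v : V) (x : Term V) {t : Term V}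
    (h : occurs v t = false) : subst v x t = t := by
  induction t with
  | S | K => rfl
  | var w =>
    simp only [occurs, decide_eq_false_iff_not] at h
    simp [subst, h]
  | app a b iha ihb =>
    simp only [occurs, Bool.or_eq_false_iff] at h
    rw [subst, iha h.1, ihb h.2]

theorem occurs_babs (v : V) (t : Term V) : occurs v (babs v t) = false := by
  induction t with
  | S | K => rfl
  | var w =>
    by_cases h : v = w
    · simp [babs, h, SKK, occurs]
    · simp [babs, h, occurs]
  | app a b iha ihb =>
    by_cases h : occurs v (.app a b)
    · rw [babs, if_pos h]
      simp [occurs, iha, ihb]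
    · rw [babs, if_neg h]
      simpa [occurs] using h

section Reduction

variable {W : Type}

namespace Reds

theorem single {a b : Term W} (h : Step a b) : Reds a b :=
  Relation.ReflTransGen.single h

theorem trans {a b c : Term W} (hab : Reds a b) (hbc : Reds b c) : Reds a c :=
  Relation.ReflTransGen.trans hab hbc

theorem app_left {a a' : Term W} (b : Term W) (h : Reds a a') :
    Reds (.app a b) (.app a' b) :=
  Relation.ReflTransGen.lift (fun t => Term.app t b) (fun _ _ s => Step.appL b s) _ _ h

theorem app_right (a : Term W) {b b' : Term W} (h : Reds b b') :
    Reds (.app a b) (.app a b') :=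
  Relation.ReflTransGen.lift (fun t => Term.app a t) (fun _ _ s => Step.appR a s) _ _ h

theorem app {a a' b b' : Term W} (ha : Reds a a') (hb : Reds b b') :
    Reds (.app a b) (.app a' b') :=
  (app_left b ha).trans (app_right a' hb)

end Reds

theorem reds_K_app (a b : Term W) : Reds (.app (.app .K a) b) a :=
  .single (.Krule a b)

theorem reds_SKK_app (x : Term W) : Reds (.app SKK x) x :=
  (Reds.single (.Srule _ _ x)).trans (reds_K_app x _)

theorem reds_S_app (a b c a' b' : Term W) (ha : Reds (.app a c) a') (hb : Reds (.app b c) b') :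
    Reds (.app (.app (.app .S a) b) c) (.app a' b') :=
  (Reds.single (.Srule a b c)).trans (ha.app hb)

end Reduction

theorem reds_babs_app (v : V) (x : Term V) (t : Term V) :
    Reds (.app (babs v t) x) (subst v x t) := by
  induction t with
  | S | K => exact reds_K_app _ x
  | var w =>
    by_cases h : v = w
    · simpa [babs, subst, h] using reds_SKK_app x
    · simpa [babs, subst, h] using reds_K_app (.var w) x
  | app a b iha ihb =>
    by_cases h : occurs v (.app a b)
    · simpa only [babs, h, if_true, subst] using reds_S_app _ _ x _ _ iha ihb
    · rw [babs, if_neg h, subst_eq_self_of_occurs_eq_false v x (Bool.eq_false_iff.mpr h)]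
      exact reds_K_app _ x

theorem abstraction_elimination (t : Term V) (v : V) :
    ∃ A : Term V, A = babs v t ∧ occurs v A = false ∧
      ∀ x : Term V, Closed x → Reds (.app A x) (subst v x t) :=
  ⟨babs v t, rfl, occurs_babs v t, fun x _ => reds_babs_app v x t⟩
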